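/- arXiv:2601.08362 — 3 statements merged into one kernel-verified Lean document; each statement's English description precedes it below -/
import Mathlib

section
/- Let A be an n×n real symmetric matrix with exactly p positive and q negative eigenvalues, let P be any orthogonal matrix with A = P·Diag(λ_1(A),…,λ_n(A))·P^T where the eigenvalues are nonincreasing, and let β = β(A) be the index set of zero eigenvalues of A. Then {H ∈ S^n : H = X^T A + A X for some real n×n matrix X} = {H ∈ S^n : (P^T H P)_{ββ} = 0}. -/
open scoped Classical RealInnerProductSpace
open Matrix Set

noncomputable section

abbrev Mat (n : ℕ) : Type := Matrix (Fin n) (Fin n) ℝ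

abbrev Em (m : ℕ) : Type := EuclideanSpace ℝ (Fin m)

attribute [instance] Matrix.frobeniusNormedAddCommGroup Matrix.frobeniusNormedSpace

/-- The trace (Frobenius) inner product `⟨A,B⟩ = tr(AᵀB)` on matrices; for symmetric
matrices this is `tr(AB)`. -/
def minner {n : ℕ} (A B : Mat n) : ℝ := (Aᵀ * B).trace

/-- `P` is an orthogonal matrix. -/
def IsOrthoMat {n : ℕ} (P : Mat n) : Prop := P * Pᵀ = 1 ∧ Pᵀ * P = 1

/-- `(P, lam)` is an eigenvalue decomposition of `A` with orthogonal `P` and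
nonincreasing eigenvalue vector `lam`: `A = P·Diag(lam)·Pᵀ`. -/
def IsEigDecomp {n : ℕ} (A P : Mat n) (lam : Fin n → ℝ) : Prop :=
  IsOrthoMat P ∧ Antitone lam ∧ A = P * Matrix.diagonal lam * Pᵀ

/-- The stratum `M_{p,q}` of symmetric matrices with exactly `p` positive and `q` negative
eigenvalues. -/
def stratum (n p q : ℕ) : Set (Mat n) :=
  {A | ∃ P lam, IsEigDecomp A P lam ∧
    {i : Fin n | 0 < lam i}.ncard = p ∧ {i : Fin n | lam i < 0}.ncard = q}

/-- The metric projection `Π₊` onto the positive semidefinite cone (defined through an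
eigenvalue decomposition; the value is independent of the choice of decomposition). -/
noncomputable def piPlus {n : ℕ} (A : Mat n) : Mat n :=
  if h : ∃ P lam, IsEigDecomp A P lam then
    h.choose * Matrix.diagonal (fun i => max (h.choose_spec.choose i) 0) * h.chooseᵀ
  else 0

variable {m n : ℕ}

/-- `G(z) = g(x) + y`. -/
def Gmap (g : Em m → Mat n) (z : Em m × Mat n) : Mat n := g z.1 + z.2

/-- The adjoint `∇g(x) : Sⁿ → ℝᵐ` of the derivative `g'(x)`, characterized by
`⟨∇g(x)H, v⟩ = ⟨H, g'(x)v⟩`. -/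
def gradg (g : Em m → Mat n) (x : Em m) (H : Mat n) : Em m :=
  (EuclideanSpace.equiv (Fin m) ℝ).symm
    fun k => (Hᵀ * fderiv ℝ g x (EuclideanSpace.single k 1)).trace

/-- The Lagrangian `L(x,y) = f(x) + ⟨y, g(x)⟩`. -/
def Lfun (f : Em m → ℝ) (g : Em m → Mat n) (x : Em m) (y : Mat n) : ℝ :=
  f x + minner y (g x)

/-- The Hessian `∇²ₓₓL(x,y)` of `x ↦ L(x,y)`, as a continuous linear map `ℝᵐ → ℝᵐ`. -/
def hessL (f : Em m → ℝ) (g : Em m → Mat n) (x : Em m) (y : Mat n) : Em m →L[ℝ] Em m :=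
  fderiv ℝ (fun u => gradient (fun w => Lfun f g w y) u) x

/-- The KKT mapping `F(z) = (∇f(x) + ∇g(x)y, −g(x) + Π₊(G(z)))`. -/
def KKTF (f : Em m → ℝ) (g : Em m → Mat n) (z : Em m × Mat n) : Em m × Mat n :=
  (gradient f z.1 + gradg g z.1 z.2, - g z.1 + piPlus (Gmap g z))

/-- The lifted stratum `M̃_{p,q} = {z = (x,y) ∈ ℝᵐ × Sⁿ : G(z) ∈ M_{p,q}}`. -/
def lstratum (g : Em m → Mat n) (p q : ℕ) : Set (Em m × Mat n) :=
  {z | z.2.IsSymm ∧ Gmap g z ∈ stratum n p q}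

/-- The norm `‖(u,H)‖ = sqrt(‖u‖² + ‖H‖²)` on `ℝᵐ × Sⁿ` (Frobenius norm on matrices). -/
def pnorm {m n : ℕ} (w : Em m × Mat n) : ℝ := Real.sqrt (‖w.1‖ ^ 2 + ‖w.2‖ ^ 2)

/-- The weak strict Robinson constraint qualification (W-SRCQ) at `z`:
`g'(x)[ℝᵐ] + {PBPᵀ : B ∈ Sⁿ, B_{βγ} = 0, B_{γγ} = 0} = Sⁿ`
(for any eigenvalue decomposition `(P, lam)` of `G(z)`; independent of the choice). -/
def WSRCQ (g : Em m → Mat n) (z : Em m × Mat n) : Prop :=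
  ∀ P lam, IsEigDecomp (Gmap g z) P lam →
    ∀ C : Mat n, C.IsSymm →
      ∃ (v : Em m) (B : Mat n), B.IsSymm ∧
        (∀ i j, lam i = 0 → lam j < 0 → B i j = 0) ∧
        (∀ i j, lam i < 0 → lam j < 0 → B i j = 0) ∧
        C = fderiv ℝ g z.1 v + P * B * Pᵀ

/-- The constraint nondegeneracy at `z`:
`g'(x)[ℝᵐ] + {PBPᵀ : B ∈ Sⁿ, B_{ββ} = 0, B_{βγ} = 0, B_{γγ} = 0} = Sⁿ`. -/
def CNondeg (g : Em m → Mat n) (z : Em m × Mat n) : Prop :=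
  ∀ P lam, IsEigDecomp (Gmap g z) P lam →
    ∀ C : Mat n, C.IsSymm →
      ∃ (v : Em m) (B : Mat n), B.IsSymm ∧
        (∀ i j, lam i = 0 → lam j = 0 → B i j = 0) ∧
        (∀ i j, lam i = 0 → lam j < 0 → B i j = 0) ∧
        (∀ i j, lam i < 0 → lam j < 0 → B i j = 0) ∧
        C = fderiv ℝ g z.1 v + P * B * Pᵀ

/-- The strict Robinson constraint qualification (SRCQ) at a KKT pair `z`:
`g'(x)[ℝᵐ] + {PBPᵀ : B ∈ Sⁿ, B_{ββ} ⪰ 0, B_{βγ} = 0, B_{γγ} = 0} = Sⁿ`. -/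
def SRCQ (g : Em m → Mat n) (z : Em m × Mat n) : Prop :=
  ∀ P lam, IsEigDecomp (Gmap g z) P lam →
    ∀ C : Mat n, C.IsSymm →
      ∃ (v : Em m) (B : Mat n), B.IsSymm ∧
        (∀ u : Fin n → ℝ, (∀ i, lam i ≠ 0 → u i = 0) →
          0 ≤ ∑ i, ∑ j, u i * B i j * u j) ∧
        (∀ i j, lam i = 0 → lam j < 0 → B i j = 0) ∧
        (∀ i j, lam i < 0 → lam j < 0 → B i j = 0) ∧
        C = fderiv ℝ g z.1 v + P * B * Pᵀ

/-- The quadratic form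
`Q(z,v) = ⟨v, ∇²ₓₓL(x,y)v⟩ + 2·Σ_{i∈α}Σ_{j∈γ} (−λⱼ/λᵢ)·([Pᵀ(g'(x)v)P]_{ij})²`. -/
def Qform (f : Em m → ℝ) (g : Em m → Mat n) (z : Em m × Mat n)
    (P : Mat n) (lam : Fin n → ℝ) (v : Em m) : ℝ :=
  ⟪v, hessL f g z.1 z.2 v⟫ +
    2 * ∑ i : Fin n, ∑ j : Fin n,
      (if 0 < lam i ∧ lam j < 0 then
        (-lam j / lam i) * ((Pᵀ * fderiv ℝ g z.1 v * P) i j) ^ 2 else 0)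

/-- `v ∈ appl(z)`: the blocks `ββ`, `βγ`, `γγ` of `Pᵀ(g'(x)v)P` vanish. -/
def memAppl (g : Em m → Mat n) (z : Em m × Mat n)
    (P : Mat n) (lam : Fin n → ℝ) (v : Em m) : Prop :=
  (∀ i j, lam i = 0 → lam j = 0 → (Pᵀ * fderiv ℝ g z.1 v * P) i j = 0) ∧
  (∀ i j, lam i = 0 → lam j < 0 → (Pᵀ * fderiv ℝ g z.1 v * P) i j = 0) ∧
  (∀ i j, lam i < 0 → lam j < 0 → (Pᵀ * fderiv ℝ g z.1 v * P) i j = 0)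

/-- `v ∈ app(z)`: the blocks `βγ`, `γγ` of `Pᵀ(g'(x)v)P` vanish. -/
def memApp (g : Em m → Mat n) (z : Em m × Mat n)
    (P : Mat n) (lam : Fin n → ℝ) (v : Em m) : Prop :=
  (∀ i j, lam i = 0 → lam j < 0 → (Pᵀ * fderiv ℝ g z.1 v * P) i j = 0) ∧
  (∀ i j, lam i < 0 → lam j < 0 → (Pᵀ * fderiv ℝ g z.1 v * P) i j = 0)

/-- The weak second order condition (W-SOC) at `z`: `Q(z,v) ≠ 0` for every nonzero
`v ∈ appl(z)`. -/
def WSOC (f : Em m → ℝ) (g : Em m → Mat n) (z : Em m × Mat n) : Prop :=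
  ∀ P lam, IsEigDecomp (Gmap g z) P lam →
    ∀ v : Em m, v ≠ 0 → memAppl g z P lam v → Qform f g z P lam v ≠ 0

/-- The strong second order sufficient condition (S-SOSC) at `z`: `Q(z,v) > 0` for every
nonzero `v ∈ app(z)`. -/
def SSOSC (f : Em m → ℝ) (g : Em m → Mat n) (z : Em m × Mat n) : Prop :=
  ∀ P lam, IsEigDecomp (Gmap g z) P lam →
    ∀ v : Em m, v ≠ 0 → memApp g z P lam v → 0 < Qform f g z P lam v

/-- The second order necessary condition (SONC) at `z`. -/
def SONC (f : Em m → ℝ) (g : Em m → Mat n) (z : Em m × Mat n) : Prop :=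
  ∀ P lam, IsEigDecomp (Gmap g z) P lam →
    ∀ v : Em m, v ≠ 0 →
      (∀ u : Fin n → ℝ, (∀ i, lam i ≠ 0 → u i = 0) →
        0 ≤ ∑ i, ∑ j, u i * (Pᵀ * fderiv ℝ g z.1 v * P) i j * u j) →
      memApp g z P lam v → 0 ≤ Qform f g z P lam v

/-- The W-SOC holds uniformly on a set `S`: there is `c > 0` with `Q(z,v) ≥ c‖v‖²` for
every `z ∈ S` (in `ℝᵐ × Sⁿ`) and every `v ∈ appl(z)`. -/
def UnifWSOC (f : Em m → ℝ) (g : Em m → Mat n) (S : Set (Em m × Mat n)) : Prop :=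
  ∃ c : ℝ, 0 < c ∧ ∀ z ∈ S, z.2.IsSymm →
    ∀ P lam, IsEigDecomp (Gmap g z) P lam →
      ∀ v : Em m, memAppl g z P lam v → c * ‖v‖ ^ 2 ≤ Qform f g z P lam v

/-- `H ∈ T_z`: `H ∈ Sⁿ` with `(PᵀHP)_{ββ} = 0`. -/
def memTz {n : ℕ} (P : Mat n) (lam : Fin n → ℝ) (H : Mat n) : Prop :=
  H.IsSymm ∧ ∀ i j, lam i = 0 → lam j = 0 → (Pᵀ * H * P) i j = 0

/-- `Δ ∈ N_{G(z)}M_{p,q}`: `Δ ∈ Sⁿ` and `(PᵀΔP)_{ij} = 0` whenever `i ∉ β` or `j ∉ β`. -/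
def memNormal {n : ℕ} (P : Mat n) (lam : Fin n → ℝ) (Δ : Mat n) : Prop :=
  Δ.IsSymm ∧ ∀ i j, (lam i ≠ 0 ∨ lam j ≠ 0) → (Pᵀ * Δ * P) i j = 0

/-- The map `ξ_z : T_z → Sⁿ`, `ξ_z(H) = P·M·Pᵀ`. -/
def xiMap {n : ℕ} (P : Mat n) (lam : Fin n → ℝ) (H : Mat n) : Mat n :=
  P * (Matrix.of fun i j =>
    if 0 < lam i ∧ 0 < lam j then (Pᵀ * H * P) i j
    else if 0 < lam i ∧ lam j = 0 then (Pᵀ * H * P) i j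
    else if lam i = 0 ∧ 0 < lam j then (Pᵀ * H * P) i j
    else if 0 < lam i ∧ lam j < 0 then (lam i / (lam i - lam j)) * (Pᵀ * H * P) i j
    else if lam i < 0 ∧ 0 < lam j then (lam j / (lam j - lam i)) * (Pᵀ * H * P) i j
    else 0) * Pᵀ

/-- The linear map `𝒜_z(v,H) = (∇²ₓₓL(x,y)v − ∇g(x)(g'(x)v) + ∇g(x)H, −g'(x)v + ξ_z(H))`. -/
def Amap (f : Em m → ℝ) (g : Em m → Mat n) (z : Em m × Mat n)
    (P : Mat n) (lam : Fin n → ℝ) (v : Em m) (H : Mat n) : Em m × Mat n :=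
  (hessL f g z.1 z.2 v - gradg g z.1 (fderiv ℝ g z.1 v) + gradg g z.1 H,
    - fderiv ℝ g z.1 v + xiMap P lam H)

/-- The positive inertia index of `A` is `p`. -/
def posInertiaIs {n : ℕ} (A : Mat n) (p : ℕ) : Prop :=
  ∃ P lam, IsEigDecomp A P lam ∧ {i : Fin n | 0 < lam i}.ncard = p

/-- The negative inertia index of `A` is `q`. -/
def negInertiaIs {n : ℕ} (A : Mat n) (q : ℕ) : Prop :=
  ∃ P lam, IsEigDecomp A P lam ∧ {i : Fin n | lam i < 0}.ncard = q

end
/-- For a symmetric `A` with exactly `p` positive and `q` negative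
eigenvalues, any orthogonal diagonalization `A = P·Diag(lam)·Pᵀ` with `lam` nonincreasing,
and `β` the zero-eigenvalue index set of `A`:
`{H ∈ Sⁿ : H = XᵀA + AX for some X} = {H ∈ Sⁿ : (PᵀHP)_{ββ} = 0}`. -/
theorem tangent_space_of_stratum {n p q : ℕ} (A P : Mat n) (lam : Fin n → ℝ)
    (hA : A.IsSymm)
    (hdec : IsEigDecomp A P lam)
    (hp : {i : Fin n | 0 < lam i}.ncard = p)
    (hq : {i : Fin n | lam i < 0}.ncard = q) :
    {H : Mat n | H.IsSymm ∧ ∃ X : Mat n, H = Xᵀ * A + A * X} =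
      {H : Mat n | H.IsSymm ∧ ∀ i j, lam i = 0 → lam j = 0 → (Pᵀ * H * P) i j = 0} := by
  obtain ⟨⟨hPPt, hPtP⟩, _hmono, hAeq⟩ := hdec
  ext H
  simp only [Set.mem_setOf_eq]
  constructor
  · rintro ⟨hHs, X, rfl⟩
    refine ⟨hHs, fun i j hi hj => ?_⟩
    have key : Pᵀ * (Xᵀ * A + A * X) * P
        = (Pᵀ * Xᵀ * P) * Matrix.diagonal lam * (Pᵀ * P)
          + (Pᵀ * P) * Matrix.diagonal lam * (Pᵀ * X * P) := by
      rw [hAeq]; noncomm_ring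
    rw [key, hPtP]
    simp only [Matrix.mul_one, Matrix.one_mul, Matrix.add_apply, Matrix.mul_diagonal,
      Matrix.diagonal_mul, hi, hj, mul_zero, zero_mul, add_zero]
  · rintro ⟨hHs, hβ⟩
    refine ⟨hHs, ?_⟩
    set K : Mat n := Pᵀ * H * P with hK
    have hKsymm : ∀ i j, K j i = K i j := by
      intro i j
      have : Kᵀ = K := by
        rw [hK]
        simp [Matrix.transpose_mul, Matrix.mul_assoc, hHs.eq]
      calc K j i = Kᵀ i j := rfl
        _ = K i j := by rw [this]
    set Z : Mat n := Matrix.of fun i j =>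
      if lam i ≠ 0 then (if lam j ≠ 0 then K i j / (2 * lam i) else K i j / lam i)
      else 0 with hZ
    refine ⟨P * Z * Pᵀ, ?_⟩
    have hmid : Zᵀ * Matrix.diagonal lam + Matrix.diagonal lam * Z = K := by
      ext i j
      simp only [Matrix.add_apply, Matrix.mul_diagonal, Matrix.diagonal_mul,
        Matrix.transpose_apply, hZ, Matrix.of_apply]
      by_cases hi : lam i = 0 <;> by_cases hj : lam j = 0 <;>
        simp only [hi, hj, if_true, if_false, ne_eq,
          not_true_eq_false, not_false_eq_true, zero_mul, mul_zero, add_zero, zero_add]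
      · exact (hβ i j hi hj).symm
      · rw [hKsymm i j]; field_simp
      · field_simp
      · rw [hKsymm i j]; field_simp; ring
    have : (P * Z * Pᵀ)ᵀ * A + A * (P * Z * Pᵀ)
        = P * (Zᵀ * Matrix.diagonal lam + Matrix.diagonal lam * Z) * Pᵀ := by
      rw [hAeq]
      have e1 : (P * Z * Pᵀ)ᵀ = P * Zᵀ * Pᵀ := by
        simp [Matrix.transpose_mul, Matrix.mul_assoc]
      rw [e1]
      calc P * Zᵀ * Pᵀ * (P * Matrix.diagonal lam * Pᵀ)
            + P * Matrix.diagonal lam * Pᵀ * (P * Z * Pᵀ)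
          = P * Zᵀ * (Pᵀ * P) * Matrix.diagonal lam * Pᵀ
            + P * Matrix.diagonal lam * (Pᵀ * P) * Z * Pᵀ := by noncomm_ring
        _ = P * (Zᵀ * Matrix.diagonal lam + Matrix.diagonal lam * Z) * Pᵀ := by
            rw [hPtP]; noncomm_ring
    rw [this, hmid, hK]
    calc H = (P * Pᵀ) * H * (P * Pᵀ) := by rw [hPPt]; simp
      _ = P * (Pᵀ * H * P) * Pᵀ := by noncomm_ring
end

section
/- Let A ∈ M_{p,q} and write A_+ := Π_+(A) and A_− := A − A_+ (so A_+ ∈ M_{p,0}, A_− ∈ M_{0,q} and A = A_+ + A_−). Then there exists ε > 0 such that for every A'_+ ∈ M_{p,0} with ‖A'_+ − A_+‖ < ε, the matrix A'_+ + A_− belongs to M_{p,q}. -/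
open scoped Classical RealInnerProductSpace
open Matrix Set

/-!
Write `A = Q·Diag(μ)·Qᵀ`, so that `A₋ = Q·Diag(min(μ, 0))·Qᵀ ⪯ 0`, and let `ε` be the smallest
nonzero `|μᵢ|`. The positive index of inertia of a symmetric matrix is the largest dimension of a
subspace on which its quadratic form is positive definite. For `B = A'₊ + A₋` this gives
`|α(B)| ≤ |α(A'₊)| = p` because `B ⪯ A'₊`, and `|α(B)| ≥ |α(A)| = p` because
`‖B - A‖ = ‖A'₊ - A₊‖ < ε`, so that `B` is still positive definite on the span of the eigenvectors
of `A` with positive eigenvalues. The negative index is handled by the same two estimates applied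
to `-B = (-A₋) + (-A'₊)`, now using `-A'₊ ⪯ 0`.
-/

open Filter Topology in
lemma exists_pos_le_abs_of_ne_zero {ι : Type*} [Finite ι] (d : ι → ℝ) :
    ∃ ε > 0, ∀ i, d i ≠ 0 → ε ≤ |d i| := by
  have hsmall : ∀ᶠ ε in 𝓝[>] (0 : ℝ), ∀ i, d i ≠ 0 → ε ≤ |d i| := by
    refine eventually_all.2 fun i => ?_
    by_cases hi : d i = 0
    · exact Eventually.of_forall fun _ h => absurd hi h
    · exact ((eventually_lt_nhds (abs_pos.2 hi)).mono fun _ h _ => h.le).filter_mono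
        nhdsWithin_le_nhds
  exact (hsmall.and self_mem_nhdsWithin).exists.imp fun ε h => ⟨h.2, h.1⟩

lemma ncard_neg_eq_ncard_pos_neg {ι : Type*} (d : ι → ℝ) :
    {i | d i < 0}.ncard = {i | 0 < (-d) i}.ncard := by
  simp only [Pi.neg_apply, neg_pos]

lemma abs_dotProduct_mulVec_self_le {ι : Type*} [Fintype ι] (E : Matrix ι ι ℝ) (x : ι → ℝ) :
    |x ⬝ᵥ E *ᵥ x| ≤ ‖E‖ * (x ⬝ᵥ x) := by
  have hinner : ∀ y z : ι → ℝ, ⟪WithLp.toLp 2 y, WithLp.toLp 2 z⟫ = y ⬝ᵥ z := fun y z => by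
    simp [EuclideanSpace.inner_eq_star_dotProduct, dotProduct_comm]
  have hmulVec : ‖WithLp.toLp 2 (E *ᵥ x)‖ ≤ ‖E‖ * ‖WithLp.toLp 2 x‖ := by
    rw [← frobenius_norm_replicateCol (ι := Fin 1), replicateCol_mulVec,
      ← frobenius_norm_replicateCol (ι := Fin 1)]
    exact frobenius_norm_mul _ _
  calc |x ⬝ᵥ E *ᵥ x| ≤ ‖WithLp.toLp 2 x‖ * ‖WithLp.toLp 2 (E *ᵥ x)‖ := by
        rw [← hinner]; exact abs_real_inner_le_norm _ _
    _ ≤ ‖WithLp.toLp 2 x‖ * (‖E‖ * ‖WithLp.toLp 2 x‖) := by gcongr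
    _ = ‖E‖ * (x ⬝ᵥ x) := by rw [← hinner, real_inner_self_eq_norm_sq]; ring

section Inertia

variable {n : ℕ}

def IsOrthoDiag (A P : Mat n) (d : Fin n → ℝ) : Prop :=
  IsOrthoMat P ∧ A = P * diagonal d * Pᵀ

lemma IsEigDecomp.isOrthoDiag {A P : Mat n} {d : Fin n → ℝ} (h : IsEigDecomp A P d) :
    IsOrthoDiag A P d :=
  ⟨h.1, h.2.2⟩

lemma IsOrthoMat.transpose_mulVec_mulVec {P : Mat n} (hP : IsOrthoMat P) (y : Fin n → ℝ) :
    Pᵀ *ᵥ (P *ᵥ y) = y := by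
  rw [mulVec_mulVec, hP.2, one_mulVec]

lemma IsOrthoMat.dotProduct_transpose_mulVec {P : Mat n} (hP : IsOrthoMat P) (x : Fin n → ℝ) :
    (Pᵀ *ᵥ x) ⬝ᵥ (Pᵀ *ᵥ x) = x ⬝ᵥ x := by
  rw [dotProduct_mulVec, mulVec_transpose, vecMul_vecMul, hP.1, vecMul_one]

lemma Matrix.IsSymm.exists_isOrthoDiag {B : Mat n} (hB : B.IsSymm) :
    ∃ U d, IsOrthoDiag B U d := by
  have hH : B.IsHermitian := by
    rwa [IsHermitian, conjTranspose_eq_transpose_of_trivial]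
  have hU₁ := mem_unitaryGroup_iff.1 hH.eigenvectorUnitary.2
  have hU₂ := mem_unitaryGroup_iff'.1 hH.eigenvectorUnitary.2
  rw [star_eq_conjTranspose, conjTranspose_eq_transpose_of_trivial] at hU₁ hU₂
  refine ⟨hH.eigenvectorUnitary, hH.eigenvalues, ⟨hU₁, hU₂⟩, ?_⟩
  conv_lhs => rw [hH.spectral_theorem]
  rw [Unitary.conjStarAlgAut_apply, star_eq_conjTranspose, conjTranspose_eq_transpose_of_trivial]
  rfl

namespace IsOrthoDiag

variable {A P : Mat n} {d : Fin n → ℝ}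

lemma exists_isEigDecomp (h : IsOrthoDiag A P d) : ∃ P' lam, IsEigDecomp A P' lam := by
  let σ := Tuple.sort (OrderDual.toDual ∘ d)
  refine ⟨P.submatrix id σ, d ∘ σ, ⟨?_, ?_⟩, Tuple.monotone_sort (OrderDual.toDual ∘ d), ?_⟩
  · rw [transpose_submatrix, submatrix_mul_equiv P Pᵀ id σ id, h.1.1, submatrix_id_id]
  · rw [transpose_submatrix]
    exact (submatrix_mul_equiv Pᵀ P σ (Equiv.refl _) σ).trans
      (by rw [h.1.2, submatrix_one_equiv])
  · rw [transpose_submatrix, ← submatrix_diagonal_equiv, submatrix_mul_equiv P _ id σ σ,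
      submatrix_mul_equiv _ Pᵀ id σ id, submatrix_id_id, h.2]

lemma isSymm (h : IsOrthoDiag A P d) : A.IsSymm := by
  rw [h.2, IsSymm, transpose_mul, transpose_mul, diagonal_transpose, transpose_transpose,
    Matrix.mul_assoc]

lemma neg (h : IsOrthoDiag A P d) : IsOrthoDiag (-A) P (-d) :=
  ⟨h.1, by rw [h.2, ← Matrix.neg_mul, ← Matrix.mul_neg, diagonal_neg]; rfl⟩

lemma dotProduct_mulVec_self (h : IsOrthoDiag A P d) (x : Fin n → ℝ) :
    x ⬝ᵥ A *ᵥ x = ∑ i, d i * (Pᵀ *ᵥ x) i ^ 2 := by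
  rw [h.2, ← mulVec_mulVec, ← mulVec_mulVec, dotProduct_mulVec, ← mulVec_transpose,
    dotProduct]
  exact Finset.sum_congr rfl fun i _ => by rw [mulVec_diagonal]; ring

lemma dotProduct_mulVec_self_nonpos (h : IsOrthoDiag A P d) {x : Fin n → ℝ}
    (hx : ∀ i, 0 < d i → (Pᵀ *ᵥ x) i = 0) : x ⬝ᵥ A *ᵥ x ≤ 0 := by
  rw [h.dotProduct_mulVec_self]
  refine Finset.sum_nonpos fun i _ => ?_
  by_cases hi : 0 < d i
  · simp [hx i hi]
  · exact mul_nonpos_of_nonpos_of_nonneg (not_lt.1 hi) (sq_nonneg _)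

lemma dotProduct_mulVec_self_nonpos_of_nonpos (h : IsOrthoDiag A P d) (hd : ∀ i, d i ≤ 0)
    (x : Fin n → ℝ) : x ⬝ᵥ A *ᵥ x ≤ 0 :=
  h.dotProduct_mulVec_self_nonpos fun i hi => absurd hi (hd i).not_gt

lemma dotProduct_mulVec_self_nonneg_of_nonneg (h : IsOrthoDiag A P d) (hd : ∀ i, 0 ≤ d i)
    (x : Fin n → ℝ) : 0 ≤ x ⬝ᵥ A *ᵥ x := by
  rw [h.dotProduct_mulVec_self]
  exact Finset.sum_nonneg fun i _ => mul_nonneg (hd i) (sq_nonneg _)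

lemma mul_dotProduct_self_le (h : IsOrthoDiag A P d) {c : ℝ} (hc : ∀ i, 0 < d i → c ≤ d i)
    {x : Fin n → ℝ} (hx : ∀ i, ¬ 0 < d i → (Pᵀ *ᵥ x) i = 0) :
    c * (x ⬝ᵥ x) ≤ x ⬝ᵥ A *ᵥ x := by
  rw [← h.1.dotProduct_transpose_mulVec, h.dotProduct_mulVec_self, dotProduct, Finset.mul_sum]
  refine Finset.sum_le_sum fun i _ => ?_
  by_cases hi : 0 < d i
  · rw [← sq]
    exact mul_le_mul_of_nonneg_right (hc i hi) (sq_nonneg _)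
  · simp [hx i hi]

lemma exists_submodule_finrank_eq_ncard_pos (h : IsOrthoDiag A P d) :
    ∃ V : Submodule ℝ (Fin n → ℝ), Module.finrank ℝ V = {i | 0 < d i}.ncard ∧
      ∀ x ∈ V, ∀ i, ¬ 0 < d i → (Pᵀ *ᵥ x) i = 0 := by
  let cols : {i | 0 < d i} → (Fin n → ℝ) := P.mulVecLin ∘ Pi.basisFun ℝ (Fin n) ∘ Subtype.val
  have hli : LinearIndependent ℝ cols := by
    have hinj : LinearMap.ker P.mulVecLin = ⊥ := LinearMap.ker_eq_bot.2 fun a b hab => by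
      simpa [h.1.transpose_mulVec_mulVec] using congrArg (Pᵀ *ᵥ ·) hab
    exact ((Pi.basisFun ℝ (Fin n)).linearIndependent.comp Subtype.val
      Subtype.val_injective).map' P.mulVecLin hinj
  refine ⟨Submodule.span ℝ (Set.range cols), ?_, fun x hx => ?_⟩
  · rw [finrank_span_eq_card hli, Set.ncard_eq_toFinset_card', Set.toFinset_card]
  · induction hx using Submodule.span_induction with
    | mem x hx =>
      obtain ⟨j, rfl⟩ := hx
      intro i hi
      simp only [cols, Function.comp_apply, mulVecLin_apply, h.1.transpose_mulVec_mulVec,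
        Pi.basisFun_apply, Pi.single_apply]
      rw [if_neg]
      rintro rfl
      exact hi j.2
    | zero => simp
    | add x y _ _ hx hy => intro i hi; simp [mulVec_add, hx i hi, hy i hi]
    | smul a x _ hx => intro i hi; simp [mulVec_smul, hx i hi]

lemma finrank_le_ncard_pos (h : IsOrthoDiag A P d) (V : Submodule ℝ (Fin n → ℝ))
    (hV : ∀ x ∈ V, x ≠ 0 → 0 < x ⬝ᵥ A *ᵥ x) :
    Module.finrank ℝ V ≤ {i | 0 < d i}.ncard := by
  let φ : V →ₗ[ℝ] ({i | 0 < d i} → ℝ) :=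
    LinearMap.funLeft ℝ ℝ Subtype.val ∘ₗ Pᵀ.mulVecLin ∘ₗ V.subtype
  have hφ : Function.Injective φ := by
    rw [← LinearMap.ker_eq_bot, LinearMap.ker_eq_bot']
    intro x hx
    by_contra hne
    have hzero : ∀ i, 0 < d i → (Pᵀ *ᵥ x) i = 0 := fun i hi => congrFun hx ⟨i, hi⟩
    exact (hV x x.2 (by simpa using hne)).not_ge (h.dotProduct_mulVec_self_nonpos hzero)
  have := LinearMap.finrank_le_finrank_of_injective hφ
  rwa [Module.finrank_fintype_fun_eq_card, ← Nat.card_eq_fintype_card,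
    Nat.card_coe_set_eq] at this

lemma ncard_pos_le_of_dotProduct_le {B R : Mat n} {e : Fin n → ℝ} (hA : IsOrthoDiag A P d)
    (hB : IsOrthoDiag B R e) (hle : ∀ x, x ⬝ᵥ A *ᵥ x ≤ x ⬝ᵥ B *ᵥ x) :
    {i | 0 < d i}.ncard ≤ {i | 0 < e i}.ncard := by
  obtain ⟨c, hc, hcd⟩ := exists_pos_le_abs_of_ne_zero d
  obtain ⟨V, hV, hVsupp⟩ := hA.exists_submodule_finrank_eq_ncard_pos
  rw [← hV]
  refine hB.finrank_le_ncard_pos V fun x hx hx0 => ?_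
  calc 0 < c * (x ⬝ᵥ x) := mul_pos hc (by simpa using dotProduct_self_star_pos_iff.2 hx0)
    _ ≤ x ⬝ᵥ A *ᵥ x :=
      hA.mul_dotProduct_self_le (fun i hi => (hcd i hi.ne').trans_eq (abs_of_pos hi))
        (hVsupp x hx)
    _ ≤ x ⬝ᵥ B *ᵥ x := hle x

lemma ncard_pos_eq {Q : Mat n} {e : Fin n → ℝ} (hP : IsOrthoDiag A P d)
    (hQ : IsOrthoDiag A Q e) : {i | 0 < d i}.ncard = {i | 0 < e i}.ncard :=
  (hP.ncard_pos_le_of_dotProduct_le hQ fun _ => le_rfl).antisymm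
    (hQ.ncard_pos_le_of_dotProduct_le hP fun _ => le_rfl)

lemma ncard_neg_eq {Q : Mat n} {e : Fin n → ℝ} (hP : IsOrthoDiag A P d)
    (hQ : IsOrthoDiag A Q e) : {i | d i < 0}.ncard = {i | e i < 0}.ncard := by
  rw [ncard_neg_eq_ncard_pos_neg, ncard_neg_eq_ncard_pos_neg e]
  exact hP.neg.ncard_pos_eq hQ.neg

lemma ncard_pos_le_of_norm_sub_lt {B R : Mat n} {e : Fin n → ℝ} {ε : ℝ}
    (hA : IsOrthoDiag A P d) (hB : IsOrthoDiag B R e) (hε : ∀ i, 0 < d i → ε ≤ d i)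
    (hAB : ‖B - A‖ < ε) : {i | 0 < d i}.ncard ≤ {i | 0 < e i}.ncard := by
  obtain ⟨V, hV, hVsupp⟩ := hA.exists_submodule_finrank_eq_ncard_pos
  rw [← hV]
  refine hB.finrank_le_ncard_pos V fun x hx hx0 => ?_
  have hxx : 0 < x ⬝ᵥ x := by simpa using dotProduct_self_star_pos_iff.2 hx0
  have hsplit : x ⬝ᵥ B *ᵥ x = x ⬝ᵥ A *ᵥ x + x ⬝ᵥ (B - A) *ᵥ x := by
    rw [sub_mulVec, dotProduct_sub]; ring
  have hA_ge := hA.mul_dotProduct_self_le hε (hVsupp x hx)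
  have hE := neg_le_of_abs_le (abs_dotProduct_mulVec_self_le (B - A) x)
  linarith [mul_lt_mul_of_pos_right hAB hxx]

lemma ncard_pos_add_eq {S N Q R : Mat n} {ρ e : Fin n → ℝ} {ε : ℝ}
    (hA : IsOrthoDiag A P d) (hS : IsOrthoDiag S Q ρ) (hSN : IsOrthoDiag (S + N) R e)
    (hN : ∀ x, x ⬝ᵥ N *ᵥ x ≤ 0) (hε : ∀ i, 0 < d i → ε ≤ d i) (hnear : ‖S + N - A‖ < ε)
    (hcount : {i | 0 < ρ i}.ncard = {i | 0 < d i}.ncard) :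
    {i | 0 < e i}.ncard = {i | 0 < d i}.ncard := by
  refine le_antisymm ?_ (hA.ncard_pos_le_of_norm_sub_lt hSN hε hnear)
  rw [← hcount]
  refine hSN.ncard_pos_le_of_dotProduct_le hS fun x => ?_
  rw [add_mulVec, dotProduct_add]
  linarith [hN x]

lemma ncard_neg_add_eq {S N Q R : Mat n} {ρ e : Fin n → ℝ} {ε : ℝ}
    (hA : IsOrthoDiag A P d) (hN : IsOrthoDiag N Q ρ) (hSN : IsOrthoDiag (S + N) R e)
    (hS : ∀ x, 0 ≤ x ⬝ᵥ S *ᵥ x) (hε : ∀ i, d i < 0 → ε ≤ -d i) (hnear : ‖S + N - A‖ < ε)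
    (hcount : {i | ρ i < 0}.ncard = {i | d i < 0}.ncard) :
    {i | e i < 0}.ncard = {i | d i < 0}.ncard := by
  rw [ncard_neg_eq_ncard_pos_neg, ncard_neg_eq_ncard_pos_neg] at hcount ⊢
  refine hA.neg.ncard_pos_add_eq hN.neg (by simpa only [neg_add_rev] using hSN.neg)
    (fun x => ?_) (fun i hi => hε i (neg_pos.1 hi)) ?_ hcount
  · rw [neg_mulVec, dotProduct_neg]
    linarith [hS x]
  · rwa [show -N + -S - -A = -(S + N - A) by abel, norm_neg]

end IsOrthoDiag

lemma exists_isOrthoDiag_sub_piPlus {A : Mat n} (hA : ∃ P lam, IsEigDecomp A P lam) :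
    ∃ Q μ, IsOrthoDiag A Q μ ∧ IsOrthoDiag (A - piPlus A) Q (fun i => min (μ i) 0) := by
  obtain ⟨hQ, -, hAQ⟩ := hA.choose_spec.choose_spec
  refine ⟨_, _, ⟨hQ, hAQ⟩, hQ, ?_⟩
  rw [piPlus, dif_pos hA]
  nth_rewrite 1 [hAQ]
  rw [← sub_mul, ← mul_sub, diagonal_sub]
  congr 3 with i
  linarith [min_add_max (hA.choose_spec.choose i) 0]

end Inertia

/-- Let `A ∈ M_{p,q}`, `A₊ = Π₊(A)` and `A₋ = A − A₊`. Then there is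
`ε > 0` such that every `A'₊ ∈ M_{p,0}` with `‖A'₊ − A₊‖ < ε` satisfies
`A'₊ + A₋ ∈ M_{p,q}`. -/
theorem stratum_stable_under_positive_part_perturbation {n p q : ℕ}
    (A : Mat n) (hA : A ∈ stratum n p q) :
    ∃ ε : ℝ, 0 < ε ∧ ∀ A'p ∈ stratum n p 0, ‖A'p - piPlus A‖ < ε →
      A'p + (A - piPlus A) ∈ stratum n p q := by
  obtain ⟨P, lam, hP, rfl, rfl⟩ := hA
  obtain ⟨Q, μ, hQ, hQminus⟩ := exists_isOrthoDiag_sub_piPlus ⟨P, lam, hP⟩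
  obtain ⟨ε, hε, hgap⟩ := exists_pos_le_abs_of_ne_zero μ
  refine ⟨ε, hε, fun A'p ⟨R, ρ, hR, hρpos, hρneg⟩ hnear => ?_⟩
  obtain ⟨U, ν, hU⟩ := (hR.isOrthoDiag.isSymm.add hQminus.isSymm).exists_isOrthoDiag
  obtain ⟨P', lam', hB⟩ := hU.exists_isEigDecomp
  have hρ : ∀ i, 0 ≤ ρ i := fun i => not_lt.1 fun hi =>
    Set.eq_empty_iff_forall_notMem.1 ((Set.ncard_eq_zero (Set.toFinite _)).1 hρneg) i hi
  have hnear' : ‖A'p + (A - piPlus A) - A‖ < ε := by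
    rwa [show A'p + (A - piPlus A) - A = A'p - piPlus A by abel]
  rw [hP.isOrthoDiag.ncard_pos_eq hQ] at hρpos ⊢
  rw [hP.isOrthoDiag.ncard_neg_eq hQ]
  refine ⟨P', lam', hB, ?_, ?_⟩
  · exact hQ.ncard_pos_add_eq hR.isOrthoDiag hB.isOrthoDiag
      (hQminus.dotProduct_mulVec_self_nonpos_of_nonpos fun i => min_le_right _ _)
      (fun i hi => (hgap i hi.ne').trans_eq (abs_of_pos hi)) hnear' hρpos
  · exact hQ.ncard_neg_add_eq hQminus hB.isOrthoDiag
      (hR.isOrthoDiag.dotProduct_mulVec_self_nonneg_of_nonneg hρ)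
      (fun i hi => (hgap i hi.ne).trans_eq (abs_of_neg hi)) hnear'
      (by simp only [min_lt_iff, lt_irrefl, or_false])
end

section
/- Let z̄ = (x̄,ȳ) ∈ ℝ^m × S^n and let q be the negative inertia index of G(z̄). If the W-SRCQ holds at z̄, then there exists an open neighborhood U of z̄ in ℝ^m × S^n such that the W-SRCQ holds at every z ∈ U for which the negative inertia index of G(z) equals q. -/
open scoped Classical RealInnerProductSpace
open Matrix Set

/-!
Suppose the W-SRCQ fails at points `z_k → z̄` whose `G(z_k)` have negative inertia index `q`.
By duality, for some eigenvalue decomposition `G(z_k) = P_k Diag(λ_k) P_kᵀ` there is a unit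
`C_k ∈ Sⁿ` orthogonal to `g'(x_k)ℝᵐ` with `(P_kᵀ C_k P_k)_{ij} = 0` off the blocks `βγ`, `γβ`,
`γγ`. The orthogonal group and the unit sphere are compact, so along a subsequence `P_k → P` and
`C_k → C`, and then `λ_k = diag(P_kᵀ G(z_k) P_k) → λ` with `G(z̄) = P Diag(λ) Pᵀ`. Eigenvalues are
sorted and the negative inertia is fixed, so `γ` is the same index set for every `k` and in the
limit, while positive limit eigenvalues are eventually positive: the constrained blocks can only
grow in the limit. Hence `C` is a unit certificate against the W-SRCQ at `z̄`.
-/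

open Filter Topology

-- `Matrix` is a type synonym, so the instance for `ι → κ → R` is not found on its own.
instance Matrix.firstCountableTopology {ι κ R : Type*} [Countable ι] [Countable κ]
    [TopologicalSpace R] [FirstCountableTopology R] : FirstCountableTopology (Matrix ι κ R) :=
  inferInstanceAs (FirstCountableTopology (ι → κ → R))

lemma Matrix.IsSymm.mul_mul_transpose {ι κ R : Type*} [Fintype ι] [CommSemiring R]
    {B : Matrix ι ι R} (hB : B.IsSymm) (P : Matrix κ ι R) : (P * B * Pᵀ).IsSymm := by
  simp only [Matrix.IsSymm, Matrix.transpose_mul, Matrix.transpose_transpose, hB.eq,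
    Matrix.mul_assoc]

section Minner

variable {n : ℕ}

lemma minner_eq_sum (A B : Mat n) : minner A B = ∑ i, ∑ j, A i j * B i j := by
  simp only [minner, Matrix.trace, Matrix.diag_apply, Matrix.mul_apply, Matrix.transpose_apply]
  exact Finset.sum_comm

lemma minner_self_eq_zero_iff {A : Mat n} : minner A A = 0 ↔ A = 0 := by
  simpa [minner] using Matrix.trace_conjTranspose_mul_self_eq_zero_iff (A := A)

lemma minner_add_right (A B C : Mat n) : minner A (B + C) = minner A B + minner A C := by
  simp only [minner, Matrix.mul_add, Matrix.trace_add]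

lemma minner_add_left (A B C : Mat n) : minner (A + B) C = minner A C + minner B C := by
  simp only [minner, Matrix.transpose_add, Matrix.add_mul, Matrix.trace_add]

lemma minner_smul_left (c : ℝ) (A B : Mat n) : minner (c • A) B = c * minner A B := by
  simp only [minner, Matrix.transpose_smul, Matrix.smul_mul, Matrix.trace_smul, smul_eq_mul]

lemma minner_transpose_left (A B : Mat n) : minner Aᵀ B = minner A Bᵀ := by
  simp only [minner, Matrix.transpose_transpose]
  rw [← Matrix.trace_transpose, Matrix.transpose_mul, Matrix.trace_mul_comm]

lemma minner_conj_right (C P B : Mat n) : minner C (P * B * Pᵀ) = minner (Pᵀ * C * P) B := by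
  simp only [minner, Matrix.transpose_mul, Matrix.transpose_transpose, Matrix.mul_assoc]
  rw [Matrix.trace_mul_comm Pᵀ]
  simp only [Matrix.mul_assoc]

lemma minner_single_add_single {X : Mat n} (hX : X.IsSymm) (i j : Fin n) :
    minner X (Matrix.single i j 1 + Matrix.single j i 1) = 2 * X i j := by
  rw [minner_add_right]
  simp only [minner, Matrix.trace_mul_single, Matrix.transpose_apply, MulOpposite.op_one, one_smul]
  rw [hX.apply i j]; ring

lemma Filter.Tendsto.minner {ι : Type*} {l : Filter ι} {f g : ι → Mat n} {A B : Mat n}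
    (hf : Tendsto f l (𝓝 A)) (hg : Tendsto g l (𝓝 B)) :
    Tendsto (fun k => minner (f k) (g k)) l (𝓝 (minner A B)) :=
  (continuous_id.matrix_trace.tendsto _).comp
    (((continuous_id.matrix_transpose.tendsto A).comp hf).mul hg)

lemma Module.Dual.exists_eq_minner (f : Module.Dual ℝ (Mat n)) :
    ∃ D : Mat n, ∀ X, f X = minner D X := by
  refine ⟨Matrix.of fun i j => f (Matrix.single i j 1), fun X => ?_⟩
  conv_lhs => rw [Matrix.matrix_eq_sum_single X]
  have hsingle : ∀ i j, Matrix.single i j (X i j) = X i j • Matrix.single i j (1 : ℝ) := by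
    intro i j; rw [Matrix.smul_single, smul_eq_mul, mul_one]
  simp only [map_sum, hsingle, map_smul, smul_eq_mul, minner_eq_sum, Matrix.of_apply, mul_comm]

end Minner

section Certificate

variable {E : Type*} [NormedAddCommGroup E] [NormedSpace ℝ E] {n : ℕ}

/-- `(i, j)` lies outside the blocks `βγ`, `γβ`, `γγ` on which the W-SRCQ makes `B` vanish. -/
def IsFreeEntry (lam : Fin n → ℝ) (i j : Fin n) : Prop :=
  ¬ (lam i ≤ 0 ∧ lam j < 0) ∧ ¬ (lam j ≤ 0 ∧ lam i < 0)

lemma IsFreeEntry.mono {lam mu : Fin n → ℝ} (hneg : ∀ i, mu i < 0 ↔ lam i < 0)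
    (hpos : ∀ i, 0 < lam i → 0 < mu i) {i j : Fin n} (h : IsFreeEntry lam i j) :
    IsFreeEntry mu i j := by
  have key : ∀ a b, ¬ (lam a ≤ 0 ∧ lam b < 0) → ¬ (mu a ≤ 0 ∧ mu b < 0) := by
    rintro a b hab ⟨ha, hb⟩
    have hb' := (hneg b).1 hb
    exact not_le.mpr (hpos a (lt_of_not_ge fun ha' => hab ⟨ha', hb'⟩)) ha
  exact ⟨key i j h.1, key j i h.2⟩

def wsrcqBlocks (lam : Fin n → ℝ) : Submodule ℝ (Mat n) where
  carrier := {B | B.IsSymm ∧ ∀ i j, lam i ≤ 0 → lam j < 0 → B i j = 0}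
  add_mem' {A B} hA hB :=
    ⟨hA.1.add hB.1, fun i j hi hj => by simp [hA.2 i j hi hj, hB.2 i j hi hj]⟩
  zero_mem' := ⟨Matrix.isSymm_zero, fun _ _ _ _ => rfl⟩
  smul_mem' c {B} hB := ⟨hB.1.smul c, fun i j hi hj => by simp [hB.2 i j hi hj]⟩

lemma entry_eq_zero_of_mem_wsrcqBlocks {lam : Fin n → ℝ} {B : Mat n} (hB : B ∈ wsrcqBlocks lam)
    {i j : Fin n} (hij : ¬ IsFreeEntry lam i j) : B i j = 0 := by
  rcases not_and_or.mp hij with h | h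
  · exact hB.2 i j (not_not.mp h).1 (not_not.mp h).2
  · rw [← hB.1.apply i j]; exact hB.2 j i (not_not.mp h).1 (not_not.mp h).2

lemma single_add_single_mem_wsrcqBlocks {lam : Fin n → ℝ} {i j : Fin n}
    (hij : IsFreeEntry lam i j) :
    Matrix.single i j 1 + Matrix.single j i 1 ∈ wsrcqBlocks lam := by
  refine ⟨?_, fun a b ha hb => ?_⟩
  · simp [Matrix.IsSymm, Matrix.transpose_add, Matrix.transpose_single, add_comm]
  · simp only [Matrix.add_apply, Matrix.single_apply]
    split_ifs with h1 h2 h2 <;> grind [IsFreeEntry]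

def WSRCQAt (T : E →L[ℝ] Mat n) (P : Mat n) (lam : Fin n → ℝ) : Prop :=
  ∀ C : Mat n, C.IsSymm →
    ∃ (v : E) (B : Mat n), B.IsSymm ∧
      (∀ i j, lam i = 0 → lam j < 0 → B i j = 0) ∧
      (∀ i j, lam i < 0 → lam j < 0 → B i j = 0) ∧
      C = T v + P * B * Pᵀ

lemma wsrcqAt_iff {T : E →L[ℝ] Mat n} {P : Mat n} {lam : Fin n → ℝ} :
    WSRCQAt T P lam ↔ ∀ C : Mat n, C.IsSymm → ∃ v, ∃ B ∈ wsrcqBlocks lam, C = T v + P * B * Pᵀ := by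
  refine forall₂_congr fun C _ => exists_congr fun v => exists_congr fun B => ?_
  simp only [wsrcqBlocks, Submodule.mem_mk, AddSubmonoid.mem_mk, AddSubsemigroup.mem_mk,
    Set.mem_ofPred_eq, le_iff_lt_or_eq]
  grind

structure IsWSRCQCertificate (T : E →L[ℝ] Mat n) (P : Mat n) (lam : Fin n → ℝ) (C : Mat n) :
    Prop where
  isSymm : C.IsSymm
  minner_apply : ∀ v, minner C (T v) = 0
  conj_apply_of_isFreeEntry : ∀ i j, IsFreeEntry lam i j → (Pᵀ * C * P) i j = 0

variable {T : E →L[ℝ] Mat n} {P : Mat n} {lam : Fin n → ℝ} {C : Mat n}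

lemma IsWSRCQCertificate.smul (hC : IsWSRCQCertificate T P lam C) (c : ℝ) :
    IsWSRCQCertificate T P lam (c • C) where
  isSymm := hC.isSymm.smul c
  minner_apply v := by rw [minner_smul_left, hC.minner_apply, mul_zero]
  conj_apply_of_isFreeEntry i j hij := by
    rw [Matrix.mul_smul, Matrix.smul_mul, Matrix.smul_apply, hC.conj_apply_of_isFreeEntry i j hij,
      smul_zero]

lemma WSRCQAt.eq_zero_of_isWSRCQCertificate (h : WSRCQAt T P lam)
    (hC : IsWSRCQCertificate T P lam C) : C = 0 := by
  obtain ⟨v, B, hB, hCeq⟩ := wsrcqAt_iff.mp h C hC.isSymm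
  rw [← minner_self_eq_zero_iff]
  nth_rewrite 2 [hCeq]
  rw [minner_add_right, hC.minner_apply, zero_add, minner_conj_right, minner_eq_sum]
  refine Finset.sum_eq_zero fun i _ => Finset.sum_eq_zero fun j _ => ?_
  by_cases hij : IsFreeEntry lam i j
  · rw [hC.conj_apply_of_isFreeEntry i j hij, zero_mul]
  · rw [entry_eq_zero_of_mem_wsrcqBlocks hB hij, mul_zero]

lemma exists_isWSRCQCertificate_of_not_wsrcqAt (hT : ∀ v, (T v).IsSymm)
    (h : ¬ WSRCQAt T P lam) : ∃ C ≠ 0, IsWSRCQCertificate T P lam C := by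
  set W := LinearMap.range (T : E →ₗ[ℝ] Mat n) ⊔
    (wsrcqBlocks lam).map (LinearMap.mulLeftRight ℝ (P, Pᵀ))
  obtain ⟨C₀, hC₀, hC₀W⟩ : ∃ C₀ : Mat n, C₀.IsSymm ∧ C₀ ∉ W := by
    simp only [wsrcqAt_iff, not_forall, not_exists] at h
    obtain ⟨C₀, hC₀, hC₀W⟩ := h
    refine ⟨C₀, hC₀, fun hmem => ?_⟩
    obtain ⟨_, ⟨v, rfl⟩, _, ⟨B, hB, rfl⟩, hsum⟩ := Submodule.mem_sup.mp hmem
    exact hC₀W v B ⟨hB, by simpa [Matrix.mul_assoc] using hsum.symm⟩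
  obtain ⟨f, hfC₀, hfW⟩ := Submodule.exists_dual_map_eq_bot_of_notMem hC₀W inferInstance
  have hf : ∀ X ∈ W, f X = 0 := fun X hX => LinearMap.le_ker_iff_map.mpr hfW hX
  obtain ⟨D, hD⟩ := Module.Dual.exists_eq_minner f
  have hDsymm : ∀ X : Mat n, X.IsSymm → minner (D + Dᵀ) X = 2 * f X := by
    intro X hX
    rw [minner_add_left, minner_transpose_left, hX.eq, ← hD]; ring
  have hconj : ∀ B ∈ wsrcqBlocks lam, minner (D + Dᵀ) (P * B * Pᵀ) = 0 := by
    intro B hB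
    rw [hDsymm _ (hB.1.mul_mul_transpose P), hf _ (Submodule.mem_sup_right ⟨B, hB, ?_⟩), mul_zero]
    simp [Matrix.mul_assoc]
  refine ⟨D + Dᵀ, fun h0 => hfC₀ ?_,
    ⟨Matrix.isSymm_add_transpose_self D, fun v => ?_, fun i j hij => ?_⟩⟩
  · have := hDsymm C₀ hC₀
    rw [h0, minner_eq_sum] at this
    simpa using this.symm
  · rw [hDsymm _ (hT v), hf (T v) (Submodule.mem_sup_left ⟨v, rfl⟩), mul_zero]
  · have hsymm : (Pᵀ * (D + Dᵀ) * P).IsSymm := by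
      simpa using (Matrix.isSymm_add_transpose_self D).mul_mul_transpose Pᵀ
    have := hconj _ (single_add_single_mem_wsrcqBlocks hij)
    rw [minner_conj_right, minner_single_add_single hsymm] at this
    linarith

lemma IsWSRCQCertificate.of_tendsto {ι : Type*} {l : Filter ι} [l.NeBot]
    {T : ι → E →L[ℝ] Mat n} {P C : ι → Mat n} {lam : ι → Fin n → ℝ}
    {T₀ : E →L[ℝ] Mat n} {P₀ C₀ : Mat n} {lam₀ : Fin n → ℝ}
    (hT : Tendsto T l (𝓝 T₀)) (hP : Tendsto P l (𝓝 P₀)) (hlam : Tendsto lam l (𝓝 lam₀))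
    (hC : Tendsto C l (𝓝 C₀)) (hneg : ∀ k i, lam k i < 0 ↔ lam₀ i < 0)
    (h : ∀ k, IsWSRCQCertificate (T k) (P k) (lam k) (C k)) :
    IsWSRCQCertificate T₀ P₀ lam₀ C₀ := by
  refine ⟨?_, fun v => ?_, fun i j hij => ?_⟩
  · have hCt : Tendsto (fun k => (C k)ᵀ) l (𝓝 C₀ᵀ) :=
      (continuous_id.matrix_transpose.tendsto _).comp hC
    exact tendsto_nhds_unique hCt (hC.congr fun k => ((h k).isSymm).symm)
  · have hTv : Tendsto (fun k => T k v) l (𝓝 (T₀ v)) :=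
      ((ContinuousLinearMap.apply ℝ (Mat n) v).continuous.tendsto T₀).comp hT
    have hlim : Tendsto (fun k => minner (C k) (T k v)) l (𝓝 (minner C₀ (T₀ v))) :=
      hC.minner hTv
    exact tendsto_nhds_unique hlim (tendsto_const_nhds.congr fun k => ((h k).minner_apply v).symm)
  · -- positive eigenvalues stay positive near the limit, so free entries stay free
    have hpos : ∀ᶠ k in l, ∀ a, 0 < lam₀ a → 0 < lam k a := eventually_all.mpr fun a => by
      by_cases ha : 0 < lam₀ a
      · exact ((tendsto_pi_nhds.mp hlam a).eventually (eventually_gt_nhds ha)).mono fun _ hk _ => hk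
      · exact Eventually.of_forall fun _ h => absurd h ha
    have hPt : Tendsto (fun k => (P k)ᵀ) l (𝓝 P₀ᵀ) :=
      (continuous_id.matrix_transpose.tendsto _).comp hP
    have hlim : Tendsto (fun k => (P k)ᵀ * C k * P k) l (𝓝 (P₀ᵀ * C₀ * P₀)) := (hPt.mul hC).mul hP
    refine tendsto_nhds_unique (tendsto_pi_nhds.mp (tendsto_pi_nhds.mp hlim i) j)
      (tendsto_const_nhds.congr' (hpos.mono fun k hk => ?_))
    exact ((h k).conj_apply_of_isFreeEntry i j (hij.mono (hneg k) hk)).symm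

end Certificate

section EigDecomp

variable {n : ℕ}

lemma IsOrthoMat.abs_apply_le_one {P : Mat n} (hP : IsOrthoMat P) (i j : Fin n) :
    |P i j| ≤ 1 := by
  have hrow : ∑ k, P i k * P i k = 1 := by
    simpa [Matrix.mul_apply] using congrFun (congrFun hP.1 i) i
  rw [abs_le_one_iff_mul_self_le_one, ← hrow]
  exact Finset.single_le_sum (fun k _ => mul_self_nonneg (P i k)) (Finset.mem_univ j)

lemma isCompact_setOf_isOrthoMat : IsCompact {P : Mat n | IsOrthoMat P} := by
  refine (isCompact_Icc (a := (-1 : ℝ)) (b := 1)).matrix.of_isClosed_subset ?_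
    fun P hP i j => abs_le.mp (hP.abs_apply_le_one i j)
  simp only [IsOrthoMat, Set.ofPred_and]
  exact (isClosed_eq (by fun_prop) continuous_const).inter
    (isClosed_eq (by fun_prop) continuous_const)

lemma isClosed_setOf_isEigDecomp :
    IsClosed {p : Mat n × Mat n × (Fin n → ℝ) | IsEigDecomp p.1 p.2.1 p.2.2} := by
  simp only [IsEigDecomp, IsOrthoMat, Set.ofPred_and]
  exact ((isClosed_eq (by fun_prop) continuous_const).inter
    (isClosed_eq (by fun_prop) continuous_const)).inter
    ((isClosed_antitone.preimage (by fun_prop)).inter (isClosed_eq (by fun_prop) (by fun_prop)))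

variable {A P : Mat n} {lam : Fin n → ℝ}

lemma IsEigDecomp.eq_diag (h : IsEigDecomp A P lam) : lam = (Pᵀ * A * P).diag := by
  obtain ⟨⟨-, hPtP⟩, -, rfl⟩ := h
  rw [show Pᵀ * (P * Matrix.diagonal lam * Pᵀ) * P = Pᵀ * P * Matrix.diagonal lam * (Pᵀ * P) by
    simp only [Matrix.mul_assoc], hPtP, Matrix.one_mul, Matrix.mul_one, Matrix.diag_diagonal]

lemma IsEigDecomp.charpoly_eq (h : IsEigDecomp A P lam) :
    A.charpoly = ∏ i, (Polynomial.X - Polynomial.C (lam i)) := by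
  rw [h.2.2, Matrix.mul_assoc, Matrix.charpoly_mul_comm, Matrix.mul_assoc, h.1.2, Matrix.mul_one,
    Matrix.charpoly_diagonal]

lemma IsEigDecomp.eigenvalues_eq {P' : Mat n} {lam' : Fin n → ℝ} (h : IsEigDecomp A P lam)
    (h' : IsEigDecomp A P' lam') : lam = lam' := by
  have hroots : ∀ mu : Fin n → ℝ,
      (∏ i, (Polynomial.X - Polynomial.C (mu i))).roots = Finset.univ.val.map mu := fun mu => by
    simpa [Multiset.map_map, Function.comp_def, Finset.prod_eq_multiset_prod] using
      Polynomial.roots_multiset_prod_X_sub_C (Finset.univ.val.map mu)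
  have hperm := congrArg Polynomial.roots (h.charpoly_eq.symm.trans h'.charpoly_eq)
  rw [hroots, hroots, Fin.univ_val_map, Fin.univ_val_map, Multiset.coe_eq_coe] at hperm
  exact List.ofFn_injective (hperm.eq_of_sortedGE h.2.1.sortedGE_ofFn h'.2.1.sortedGE_ofFn)

lemma Antitone.lt_zero_iff_sub_ncard_le {lam : Fin n → ℝ} (h : Antitone lam) (i : Fin n) :
    lam i < 0 ↔ n - {j | lam j < 0}.ncard ≤ i := by
  set S := Finset.univ.filter fun j => lam j < 0
  have hS : {j | lam j < 0}.ncard = S.card := by rw [← Set.ncard_coe_finset]; simp [S]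
  rw [hS]
  constructor
  · intro hi
    have := Finset.card_le_card (show Finset.Ici i ⊆ S from fun j hj => by
      simpa [S] using (h (Finset.mem_Ici.mp hj)).trans_lt hi)
    rw [Fin.card_Ici] at this
    omega
  · intro hi
    by_contra hi'
    have := Finset.card_le_card (show S ⊆ Finset.Ioi i from fun j hj => by
      simp only [S, Finset.mem_filter, Finset.mem_univ, true_and] at hj
      exact Finset.mem_Ioi.mpr (lt_of_not_ge fun hji => hi' ((h hji).trans_lt hj)))
    rw [Fin.card_Ioi] at this
    omega

lemma tendsto_eigenvalues_of_isEigDecomp {ι : Type*} {l : Filter ι} {A P : ι → Mat n}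
    {lam : ι → Fin n → ℝ} {A₀ P₀ : Mat n} (hA : Tendsto A l (𝓝 A₀)) (hP : Tendsto P l (𝓝 P₀))
    (h : ∀ k, IsEigDecomp (A k) (P k) (lam k)) :
    Tendsto lam l (𝓝 (P₀ᵀ * A₀ * P₀).diag) := by
  rw [show lam = fun k => ((P k)ᵀ * A k * P k).diag from funext fun k => (h k).eq_diag]
  exact (continuous_id.matrix_diag.tendsto _).comp
    ((((continuous_id.matrix_transpose.tendsto _).comp hP).mul hA).mul hP)

lemma isEigDecomp_of_tendsto {ι : Type*} {l : Filter ι} [l.NeBot] {A P : ι → Mat n}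
    {lam : ι → Fin n → ℝ} {A₀ P₀ : Mat n} {lam₀ : Fin n → ℝ} (hA : Tendsto A l (𝓝 A₀))
    (hP : Tendsto P l (𝓝 P₀)) (hlam : Tendsto lam l (𝓝 lam₀))
    (h : ∀ k, IsEigDecomp (A k) (P k) (lam k)) : IsEigDecomp A₀ P₀ lam₀ :=
  isClosed_setOf_isEigDecomp.mem_of_tendsto (hA.prodMk_nhds (hP.prodMk_nhds hlam))
    (Eventually.of_forall h)

lemma negInertiaIs.lt_zero_iff {B Q : Mat n} {mu : Fin n → ℝ} {q : ℕ} (hA : negInertiaIs A q)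
    (hB : negInertiaIs B q) (hdA : IsEigDecomp A P lam) (hdB : IsEigDecomp B Q mu) (i : Fin n) :
    lam i < 0 ↔ mu i < 0 := by
  obtain ⟨P', lam', hdA', hq⟩ := hA
  obtain ⟨Q', mu', hdB', hq'⟩ := hB
  rw [hdA.2.1.lt_zero_iff_sub_ncard_le, hdB.2.1.lt_zero_iff_sub_ncard_le, hdA.eigenvalues_eq hdA',
    hdB.eigenvalues_eq hdB', hq, hq']

end EigDecomp

lemma fderiv_apply_isSymm {E : Type*} [NormedAddCommGroup E] [NormedSpace ℝ E] {n : ℕ}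
    {g : E → Mat n} (hgs : ∀ x, (g x).IsSymm) (x v : E) : (fderiv ℝ g x v).IsSymm := by
  let τ : Mat n ≃L[ℝ] Mat n :=
    (Matrix.transposeLinearEquiv (Fin n) (Fin n) ℝ ℝ).toContinuousLinearEquiv
  have hτ : fderiv ℝ g x = (τ : Mat n →L[ℝ] Mat n).comp (fderiv ℝ g x) :=
    (congrArg (fderiv ℝ · x) (funext hgs : τ ∘ g = g).symm).trans τ.comp_fderiv
  exact (congrArg (· v) hτ).symm

lemma exists_isWSRCQCertificate_of_not_wsrcq {m n : ℕ} {g : Em m → Mat n}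
    (hgs : ∀ x, (g x).IsSymm) {z : Em m × Mat n} (h : ¬ WSRCQ g z) :
    ∃ P lam C, IsEigDecomp (Gmap g z) P lam ∧ ‖C‖ = 1 ∧
      IsWSRCQCertificate (fderiv ℝ g z.1) P lam C := by
  obtain ⟨P, lam, hdec, hfail⟩ :
      ∃ P lam, IsEigDecomp (Gmap g z) P lam ∧ ¬ WSRCQAt (fderiv ℝ g z.1) P lam := by
    by_contra! hall
    exact h hall
  obtain ⟨C, hC0, hC⟩ :=
    exists_isWSRCQCertificate_of_not_wsrcqAt (fderiv_apply_isSymm hgs z.1) hfail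
  exact ⟨P, lam, ‖C‖⁻¹ • C, hdec, norm_smul_inv_norm hC0, hC.smul _⟩

theorem WSRCQ_open_fixed_negative_inertia_general {m n q : ℕ}
    (g : Em m → Mat n)
    (hg : ContDiff ℝ 2 g) (hgs : ∀ x, (g x).IsSymm)
    (zbar : Em m × Mat n)
    (hq : negInertiaIs (Gmap g zbar) q)
    (hW : WSRCQ g zbar) :
    ∃ U : Set (Em m × Mat n), IsOpen U ∧ zbar ∈ U ∧
      ∀ z ∈ U, z.2.IsSymm → negInertiaIs (Gmap g z) q → WSRCQ g z := by
  suffices h : ∀ᶠ z in 𝓝 zbar, negInertiaIs (Gmap g z) q → WSRCQ g z by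
    obtain ⟨U, hU, hUo, hzU⟩ := eventually_nhds_iff.mp h
    exact ⟨U, hUo, hzU, fun z hz _ => hU z hz⟩
  by_contra hbad
  obtain ⟨z, hz, hzbad⟩ := exists_seq_forall_of_frequently (not_eventually.mp hbad)
  simp only [Classical.not_imp] at hzbad
  choose P lam C hdec hC hcert using fun k => exists_isWSRCQCertificate_of_not_wsrcq hgs (hzbad k).2
  obtain ⟨⟨P₀, C₀⟩, ⟨-, hC₀⟩, φ, hφ, hlim⟩ :=
    (isCompact_setOf_isOrthoMat.prod (isCompact_sphere 0 1)).tendsto_subseq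
      (x := fun k => (P k, C k)) fun k => ⟨(hdec k).1, mem_sphere_zero_iff_norm.mpr (hC k)⟩
  have hzφ := hz.comp hφ.tendsto_atTop
  have hPφ : Tendsto (P ∘ φ) atTop (𝓝 P₀) := (continuous_fst.tendsto _).comp hlim
  have hCφ : Tendsto (C ∘ φ) atTop (𝓝 C₀) := (continuous_snd.tendsto _).comp hlim
  have hG : Tendsto (fun k => Gmap g (z (φ k))) atTop (𝓝 (Gmap g zbar)) :=
    (((hg.continuous.comp continuous_fst).add continuous_snd).tendsto zbar).comp hzφ
  have hT : Tendsto (fun k => fderiv ℝ g (z (φ k)).1) atTop (𝓝 (fderiv ℝ g zbar.1)) :=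
    ((hg.continuous_fderiv (by norm_num)).tendsto _).comp ((continuous_fst.tendsto _).comp hzφ)
  have hlam := tendsto_eigenvalues_of_isEigDecomp hG hPφ fun k => hdec (φ k)
  have hdec₀ := isEigDecomp_of_tendsto hG hPφ hlam fun k => hdec (φ k)
  have hneg k i := (hzbad (φ k)).1.lt_zero_iff hq (hdec (φ k)) hdec₀ i
  have hcert₀ := IsWSRCQCertificate.of_tendsto hT hPφ hlam hCφ hneg fun k => hcert (φ k)
  have hC₀0 := WSRCQAt.eq_zero_of_isWSRCQCertificate (hW P₀ _ hdec₀) hcert₀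
  simp [hC₀0] at hC₀

/-- Openness of the W-SRCQ along points with the same negative inertia
index: if the W-SRCQ holds at `z̄` and `q` is the negative inertia index of `G(z̄)`, then it
holds at all nearby `z ∈ ℝᵐ × Sⁿ` whose `G(z)` has negative inertia index `q`. -/
theorem WSRCQ_open_fixed_negative_inertia {m n q : ℕ}
    (g : Em m → Mat n)
    (hg : ContDiff ℝ 2 g) (hgs : ∀ x, (g x).IsSymm)
    (zbar : Em m × Mat n) (hsym : zbar.2.IsSymm)
    (hq : negInertiaIs (Gmap g zbar) q)
    (hW : WSRCQ g zbar) :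
    ∃ U : Set (Em m × Mat n), IsOpen U ∧ zbar ∈ U ∧
      ∀ z ∈ U, z.2.IsSymm → negInertiaIs (Gmap g z) q → WSRCQ g z :=
  WSRCQ_open_fixed_negative_inertia_general g hg hgs zbar hq hW
end
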